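/- arXiv:2602.02875 — 3 statements merged into one kernel-verified Lean document; each statement's English description precedes it below -/
import Mathlib

section
/- For all ω > 0, η > 0 and y ≥ 0, the integral of the Shiha density from 0 to y equals the Shiha cumulative distribution function: ∫₀^y f(t; ω, η) dt = 1 − (1/(ω + 3η)) · [ω + (3η + 4ωηy) e^{-ωy}] e^{-ωy}. -/
open Real MeasureTheory

noncomputable def shihaPdf (ω η y : ℝ) : ℝ :=
  ω / (ω + 3 * η) * (ω + (2 * η + 8 * ω * η * y) * Real.exp (-ω * y)) * Real.exp (-ω * y)

noncomputable def shihaCdf (ω η y : ℝ) : ℝ :=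
  1 - (1 / (ω + 3 * η)) * (ω + (3 * η + 4 * ω * η * y) * Real.exp (-ω * y)) * Real.exp (-ω * y)

theorem hasDerivAt_shihaCdf (ω η t : ℝ) : HasDerivAt (shihaCdf ω η) (shihaPdf ω η t) t := by
  have hexp : HasDerivAt (fun t ↦ exp (-ω * t)) (exp (-ω * t) * -ω) t := by
    simpa using ((hasDerivAt_id t).const_mul (-ω)).exp
  have hlin : HasDerivAt (fun t ↦ 3 * η + 4 * ω * η * t) (4 * ω * η) t := by
    simpa using ((hasDerivAt_id t).const_mul (4 * ω * η)).const_add (3 * η)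
  have hcdf : shihaCdf ω η = fun s ↦
      1 - 1 / (ω + 3 * η) * ((ω + (3 * η + 4 * ω * η * s) * exp (-ω * s)) * exp (-ω * s)) := by
    funext s
    simp only [shihaCdf, mul_assoc]
  rw [hcdf]
  refine ((((hlin.mul hexp).const_add ω).mul hexp).const_mul _).const_sub 1 |>.congr_deriv ?_
  simp only [shihaPdf, Pi.mul_apply]
  ring

theorem continuous_shihaPdf (ω η : ℝ) : Continuous (shihaPdf ω η) := by
  unfold shihaPdf
  fun_prop

theorem shihaCdf_zero {ω η : ℝ} (h : ω + 3 * η ≠ 0) : shihaCdf ω η 0 = 0 := by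
  simp [shihaCdf, h]

theorem shiha_integral_pdf_eq_cdf_general (ω η : ℝ) (hω : 0 < ω) (hη : 0 < η) (y : ℝ) :
    (∫ t in (0 : ℝ)..y, shihaPdf ω η t) = shihaCdf ω η y := by
  rw [intervalIntegral.integral_eq_sub_of_hasDerivAt (fun t _ ↦ hasDerivAt_shihaCdf ω η t)
      ((continuous_shihaPdf ω η).intervalIntegrable 0 y),
    shihaCdf_zero (by positivity), sub_zero]

theorem shiha_integral_pdf_eq_cdf (ω η : ℝ) (hω : 0 < ω) (hη : 0 < η) (y : ℝ) (hy : 0 ≤ y) :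
    (∫ t in (0 : ℝ)..y, shihaPdf ω η t) = shihaCdf ω η y :=
  shiha_integral_pdf_eq_cdf_general ω η hω hη y
end

section
/- For all ω > 0, η > 0 and y ≥ 0, the Shiha density is the mixture f(y; ω, η) = p₁ · (ω e^{-ωy}) + p₂ · (2ω e^{-2ωy}) + p₃ · ((2ω)² y e^{-2ωy}), where p₁ = ω/(ω + 3η), p₂ = η/(ω + 3η), p₃ = 2η/(ω + 3η); here ω e^{-ωy}, 2ω e^{-2ωy}, and (2ω)² y e^{-2ωy} are respectively the densities of the Exp(ω), Exp(2ω), and Gamma(2, 2ω) distributions, and p₁ + p₂ + p₃ = 1. -/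
open Real

theorem exp_neg_two_mul_mul_eq_sq (a y : ℝ) : exp (-(2 * a) * y) = exp (-a * y) ^ 2 := by
  rw [sq, ← exp_add]
  ring_nf

theorem shihaPdf_eq_mixture (ω η y : ℝ) :
    shihaPdf ω η y
      = (ω / (ω + 3 * η)) * (ω * exp (-ω * y))
        + (η / (ω + 3 * η)) * (2 * ω * exp (-(2 * ω) * y))
        + (2 * η / (ω + 3 * η)) * ((2 * ω) ^ 2 * y * exp (-(2 * ω) * y)) := by
  rw [shihaPdf, exp_neg_two_mul_mul_eq_sq]
  ring

theorem shiha_mixture_weights_sum {ω η : ℝ} (h : ω + 3 * η ≠ 0) :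
    ω / (ω + 3 * η) + η / (ω + 3 * η) + 2 * η / (ω + 3 * η) = 1 := by
  rw [← add_div, ← add_div, div_eq_one_iff_eq h]
  ring

theorem shiha_pdf_mixture_general (ω η : ℝ) (hω : 0 < ω) (hη : 0 < η) (y : ℝ) :
    shihaPdf ω η y
      = (ω / (ω + 3 * η)) * (ω * Real.exp (-ω * y))
        + (η / (ω + 3 * η)) * (2 * ω * Real.exp (-(2 * ω) * y))
        + (2 * η / (ω + 3 * η)) * ((2 * ω) ^ 2 * y * Real.exp (-(2 * ω) * y)) ∧
    (ω / (ω + 3 * η)) + (η / (ω + 3 * η)) + (2 * η / (ω + 3 * η)) = 1 :=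
  ⟨shihaPdf_eq_mixture ω η y, shiha_mixture_weights_sum (by positivity)⟩

theorem shiha_pdf_mixture (ω η : ℝ) (hω : 0 < ω) (hη : 0 < η) (y : ℝ) (hy : 0 ≤ y) :
    shihaPdf ω η y
      = (ω / (ω + 3 * η)) * (ω * Real.exp (-ω * y))
        + (η / (ω + 3 * η)) * (2 * ω * Real.exp (-(2 * ω) * y))
        + (2 * η / (ω + 3 * η)) * ((2 * ω) ^ 2 * y * Real.exp (-(2 * ω) * y)) ∧
    (ω / (ω + 3 * η)) + (η / (ω + 3 * η)) + (2 * η / (ω + 3 * η)) = 1 :=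
  shiha_pdf_mixture_general ω η hω hη y
end

section
/- Let ω₁, η₁, ω₂, η₂ > 0. Then the stress–strength integral R = ∫₀^∞ f(y; ω₁, η₁) F(y; ω₂, η₂) dy equals 1 − (ω₁ / ((ω₁ + 3η₁)(ω₂ + 3η₂))) · [ ω₂ ( ω₁/(ω₁ + ω₂) + 2η₁/(2ω₁ + ω₂) + 8ω₁η₁/(2ω₁ + ω₂)² ) + 3η₂ ( ω₁/(ω₁ + 2ω₂) + η₁/(ω₁ + ω₂) + 2ω₁η₁/(ω₁ + ω₂)² ) + 4ω₂η₂ ( ω₁/(ω₁ + 2ω₂)² + η₁/(2(ω₁ + ω₂)²) + 2ω₁η₁/(ω₁ + ω₂)³ ) ]. -/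
open Real MeasureTheory

/-!
Write `F₂ = 1 - S₂`, where `S₂` is a combination of `e^{-ω₂ y}`, `e^{-2ω₂ y}` and `y e^{-2ω₂ y}`.
Since `f₁` is a density, `R = 1 - ∫ f₁ S₂`, and `∫ f₁ S₂` is a combination of the moments
`∫₀^∞ y^k e^{-s y} f₁(y) dy`. Expanding `f₁`, these are sums of Gamma integrals
`∫₀^∞ y^k e^{-c y} dy = k! / c^{k+1}`.
-/

open Set
open scoped Nat

theorem integral_pow_mul_exp_neg_mul_Ioi (k : ℕ) {c : ℝ} (hc : 0 < c) :
    ∫ y in Ioi 0, y ^ k * exp (-(c * y)) = k ! / c ^ (k + 1) := by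
  have key := integral_rpow_mul_exp_neg_mul_Ioi (a := k + 1) (by positivity) hc
  simp only [add_sub_cancel_right, rpow_natCast, Gamma_nat_eq_factorial] at key
  rw [key, ← Nat.cast_add_one, rpow_natCast, one_div, inv_pow, inv_mul_eq_div]

theorem integrableOn_pow_mul_exp_neg_mul_Ioi (k : ℕ) {c : ℝ} (hc : 0 < c) :
    IntegrableOn (fun y : ℝ => y ^ k * exp (-(c * y))) (Ioi 0) :=
  .of_integral_ne_zero (by rw [integral_pow_mul_exp_neg_mul_Ioi k hc]; positivity)

theorem pow_mul_exp_mul_shihaPdf (k : ℕ) (ω η s y : ℝ) :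
    y ^ k * exp (-(s * y)) * shihaPdf ω η y
      = ω / (ω + 3 * η) * (ω * (y ^ k * exp (-((ω + s) * y)))
        + 2 * η * (y ^ k * exp (-((2 * ω + s) * y)))
        + 8 * ω * η * (y ^ (k + 1) * exp (-((2 * ω + s) * y)))) := by
  rw [shihaPdf, show -((ω + s) * y) = -ω * y + -(s * y) by ring,
    show -((2 * ω + s) * y) = -ω * y + -ω * y + -(s * y) by ring, exp_add, exp_add, exp_add]
  ring

theorem integrableOn_pow_mul_exp_mul_shihaPdf (k : ℕ) {ω η s : ℝ}
    (h₁ : 0 < ω + s) (h₂ : 0 < 2 * ω + s) :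
    IntegrableOn (fun y => y ^ k * exp (-(s * y)) * shihaPdf ω η y) (Ioi 0) := by
  simp only [pow_mul_exp_mul_shihaPdf]
  exact ((((integrableOn_pow_mul_exp_neg_mul_Ioi k h₁).const_mul _).add
    ((integrableOn_pow_mul_exp_neg_mul_Ioi k h₂).const_mul _)).add
    ((integrableOn_pow_mul_exp_neg_mul_Ioi (k + 1) h₂).const_mul _)).const_mul _

noncomputable def shihaMoment (ω η : ℝ) (k : ℕ) (s : ℝ) : ℝ :=
  ∫ y in Ioi 0, y ^ k * exp (-(s * y)) * shihaPdf ω η y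

theorem shihaMoment_eq (k : ℕ) {ω η s : ℝ} (h₁ : 0 < ω + s) (h₂ : 0 < 2 * ω + s) :
    shihaMoment ω η k s = ω / (ω + 3 * η) * k ! * (ω / (ω + s) ^ (k + 1)
      + 2 * η / (2 * ω + s) ^ (k + 1) + 8 * ω * η * (k + 1) / (2 * ω + s) ^ (k + 2)) := by
  have i₁ := integrableOn_pow_mul_exp_neg_mul_Ioi k h₁
  have i₂ := integrableOn_pow_mul_exp_neg_mul_Ioi k h₂
  have i₃ := integrableOn_pow_mul_exp_neg_mul_Ioi (k + 1) h₂
  simp only [shihaMoment, pow_mul_exp_mul_shihaPdf]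
  rw [integral_const_mul, integral_add, integral_add, integral_const_mul, integral_const_mul,
    integral_const_mul, integral_pow_mul_exp_neg_mul_Ioi k h₁,
    integral_pow_mul_exp_neg_mul_Ioi k h₂, integral_pow_mul_exp_neg_mul_Ioi (k + 1) h₂,
    Nat.factorial_succ]
  · push_cast
    ring
  · exact i₁.const_mul _
  · exact i₂.const_mul _
  · exact (i₁.const_mul _).add (i₂.const_mul _)
  · exact i₃.const_mul _

theorem integral_shihaPdf {ω η : ℝ} (hω : 0 < ω) (hωη : ω + 3 * η ≠ 0) :
    ∫ y in Ioi 0, shihaPdf ω η y = 1 := by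
  have h := shihaMoment_eq 0 (η := η) (s := 0) (by linarith) (by linarith)
  simp only [shihaMoment, pow_zero, zero_mul, neg_zero, exp_zero, one_mul] at h
  rw [h]
  field_simp
  ring

theorem shihaCdf_eq (ω η y : ℝ) :
    shihaCdf ω η y = 1 - 1 / (ω + 3 * η) * (ω * exp (-(ω * y)) + 3 * η * exp (-(2 * ω * y))
      + 4 * ω * η * (y * exp (-(2 * ω * y)))) := by
  rw [shihaCdf, show -(2 * ω * y) = -ω * y + -ω * y by ring, exp_add, neg_mul]
  ring

theorem integral_shihaPdf_mul_shihaCdf {ω₁ η₁ ω₂ η₂ : ℝ} (hω₁ : 0 < ω₁) (hω₂ : 0 < ω₂)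
    (hωη₁ : ω₁ + 3 * η₁ ≠ 0) :
    ∫ y in Ioi 0, shihaPdf ω₁ η₁ y * shihaCdf ω₂ η₂ y
      = 1 - 1 / (ω₂ + 3 * η₂) * (ω₂ * shihaMoment ω₁ η₁ 0 ω₂
        + 3 * η₂ * shihaMoment ω₁ η₁ 0 (2 * ω₂) + 4 * ω₂ * η₂ * shihaMoment ω₁ η₁ 1 (2 * ω₂)) := by
  have h₁ : 0 < ω₁ + ω₂ := by positivity
  have h₂ : 0 < 2 * ω₁ + ω₂ := by positivity
  have h₃ : 0 < ω₁ + 2 * ω₂ := by positivity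
  have h₄ : 0 < 2 * ω₁ + 2 * ω₂ := by positivity
  have i₀ : Integrable (shihaPdf ω₁ η₁) (volume.restrict (Ioi 0)) := by
    simpa using (integrableOn_pow_mul_exp_mul_shihaPdf 0 (η := η₁) (s := 0)
      (by linarith) (by linarith)).integrable
  have i₁ := (integrableOn_pow_mul_exp_mul_shihaPdf 0 (η := η₁) h₁ h₂).integrable
  have i₂ := (integrableOn_pow_mul_exp_mul_shihaPdf 0 (η := η₁) h₃ h₄).integrable
  have i₃ := (integrableOn_pow_mul_exp_mul_shihaPdf 1 (η := η₁) h₃ h₄).integrable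
  have hsplit : ∀ y, shihaPdf ω₁ η₁ y * shihaCdf ω₂ η₂ y = shihaPdf ω₁ η₁ y
      - 1 / (ω₂ + 3 * η₂) * (ω₂ * (y ^ 0 * exp (-(ω₂ * y)) * shihaPdf ω₁ η₁ y)
        + 3 * η₂ * (y ^ 0 * exp (-(2 * ω₂ * y)) * shihaPdf ω₁ η₁ y)
        + 4 * ω₂ * η₂ * (y ^ 1 * exp (-(2 * ω₂ * y)) * shihaPdf ω₁ η₁ y)) := by
    intro y
    rw [shihaCdf_eq]
    ring
  simp only [hsplit, shihaMoment]
  rw [integral_sub, integral_const_mul, integral_add, integral_add, integral_const_mul,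
    integral_const_mul, integral_const_mul, integral_shihaPdf hω₁ hωη₁]
  all_goals fun_prop

theorem shiha_stress_strength_general (ω₁ η₁ ω₂ η₂ : ℝ)
    (hω₁ : 0 < ω₁) (hη₁ : 0 < η₁) (hω₂ : 0 < ω₂) :
    (∫ y in Set.Ioi (0 : ℝ), shihaPdf ω₁ η₁ y * shihaCdf ω₂ η₂ y)
      = 1 - (ω₁ / ((ω₁ + 3 * η₁) * (ω₂ + 3 * η₂))) *
          (ω₂ * (ω₁ / (ω₁ + ω₂) + 2 * η₁ / (2 * ω₁ + ω₂) + 8 * ω₁ * η₁ / (2 * ω₁ + ω₂) ^ 2)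
           + 3 * η₂ * (ω₁ / (ω₁ + 2 * ω₂) + η₁ / (ω₁ + ω₂) + 2 * ω₁ * η₁ / (ω₁ + ω₂) ^ 2)
           + 4 * ω₂ * η₂ * (ω₁ / (ω₁ + 2 * ω₂) ^ 2 + η₁ / (2 * (ω₁ + ω₂) ^ 2)
               + 2 * ω₁ * η₁ / (ω₁ + ω₂) ^ 3)) := by
  have h₁ : 0 < ω₁ + ω₂ := by positivity
  have h₂ : 0 < 2 * ω₁ + ω₂ := by positivity
  have h₃ : 0 < ω₁ + 2 * ω₂ := by positivity
  have h₄ : 0 < 2 * ω₁ + 2 * ω₂ := by positivity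
  rw [integral_shihaPdf_mul_shihaCdf hω₁ hω₂ (by positivity), shihaMoment_eq 0 h₁ h₂,
    shihaMoment_eq 0 h₃ h₄, shihaMoment_eq 1 h₃ h₄]
  field_simp
  ring

theorem shiha_stress_strength (ω₁ η₁ ω₂ η₂ : ℝ)
    (hω₁ : 0 < ω₁) (hη₁ : 0 < η₁) (hω₂ : 0 < ω₂) (hη₂ : 0 < η₂) :
    (∫ y in Set.Ioi (0 : ℝ), shihaPdf ω₁ η₁ y * shihaCdf ω₂ η₂ y)
      = 1 - (ω₁ / ((ω₁ + 3 * η₁) * (ω₂ + 3 * η₂))) *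
          (ω₂ * (ω₁ / (ω₁ + ω₂) + 2 * η₁ / (2 * ω₁ + ω₂) + 8 * ω₁ * η₁ / (2 * ω₁ + ω₂) ^ 2)
           + 3 * η₂ * (ω₁ / (ω₁ + 2 * ω₂) + η₁ / (ω₁ + ω₂) + 2 * ω₁ * η₁ / (ω₁ + ω₂) ^ 2)
           + 4 * ω₂ * η₂ * (ω₁ / (ω₁ + 2 * ω₂) ^ 2 + η₁ / (2 * (ω₁ + ω₂) ^ 2)
               + 2 * ω₁ * η₁ / (ω₁ + ω₂) ^ 3)) :=
  shiha_stress_strength_general ω₁ η₁ ω₂ η₂ hω₁ hη₁ hω₂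
end
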